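/- arXiv:2402.00501 — 4 statements merged into one kernel-verified Lean document; each statement's English description precedes it below -/
import Mathlib

section
/- Let Q be a probability measure on a measurable space M, let L : M → [0,∞) be measurable, let λ > 0, and let f : (0,∞) → ℝ be strictly convex and differentiable. Suppose β₁, β₂ ∈ ℝ and measurable functions ρ₁, ρ₂ : M → (0,∞) satisfy f'(ρᵢ(θ)) = −(βᵢ + L(θ))/λ for Q-almost every θ and ∫ ρᵢ dQ = 1 for i = 1, 2. Then β₁ = β₂ (and consequently ρ₁ = ρ₂ Q-almost everywhere). That is, the normalization constant β satisfying the normalization equation ∫ (f')⁻¹(−(β + L(θ))/λ) dQ(θ) = 1 is unique. -/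
open MeasureTheory Real Set

private lemma erm_aux {M : Type*} [MeasurableSpace M]
    (Q : Measure M) [IsProbabilityMeasure Q]
    (L : M → ℝ) (lam : ℝ) (hlam : 0 < lam)
    (f' : ℝ → ℝ) (hmono : StrictMonoOn f' (Ioi 0))
    (β₁ β₂ : ℝ) (ρ₁ ρ₂ : M → ℝ)
    (hρ₁_pos : ∀ θ, 0 < ρ₁ θ) (hρ₂_pos : ∀ θ, 0 < ρ₂ θ)
    (hρ₁_eq : ∀ᵐ θ ∂Q, f' (ρ₁ θ) = -((β₁ + L θ) / lam))
    (hρ₂_eq : ∀ᵐ θ ∂Q, f' (ρ₂ θ) = -((β₂ + L θ) / lam))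
    (hρ₁_norm : ∫ θ, ρ₁ θ ∂Q = 1)
    (hρ₂_norm : ∫ θ, ρ₂ θ ∂Q = 1)
    (hβ : β₁ < β₂) : False := by
  have hint₁ : Integrable ρ₁ Q := by
    by_contra h
    rw [integral_undef h] at hρ₁_norm; norm_num at hρ₁_norm
  have hint₂ : Integrable ρ₂ Q := by
    by_contra h
    rw [integral_undef h] at hρ₂_norm; norm_num at hρ₂_norm
  have hlt : ∀ᵐ θ ∂Q, ρ₂ θ < ρ₁ θ := by
    filter_upwards [hρ₁_eq, hρ₂_eq] with θ h₁ h₂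
    have hflt : f' (ρ₂ θ) < f' (ρ₁ θ) := by
      rw [h₁, h₂]
      have : (β₁ + L θ) / lam < (β₂ + L θ) / lam := by
        rw [div_lt_div_iff₀ hlam hlam]; nlinarith
      linarith
    exact (hmono.lt_iff_lt (hρ₂_pos θ) (hρ₁_pos θ)).mp hflt
  have hsub : ∫ θ, (ρ₁ θ - ρ₂ θ) ∂Q = 0 := by
    rw [integral_sub hint₁ hint₂, hρ₁_norm, hρ₂_norm]; ring
  have hnn : 0 ≤ᵐ[Q] fun θ => ρ₁ θ - ρ₂ θ := by
    filter_upwards [hlt] with θ h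
    simp only [Pi.zero_apply]; linarith
  have hzero : (fun θ => ρ₁ θ - ρ₂ θ) =ᵐ[Q] 0 :=
    (integral_eq_zero_iff_of_nonneg_ae hnn (hint₁.sub hint₂)).mp hsub
  have : ∀ᵐ θ ∂Q, False := by
    filter_upwards [hlt, hzero] with θ h1 h2
    simp only [Pi.zero_apply] at h2; linarith
  exact (this.exists).choose_spec

/-- **Uniqueness of the normalization constant.**
If `β₁, β₂` together with strictly positive densities `ρ₁, ρ₂` both satisfy the
characterization `f' (ρᵢ θ) = -(βᵢ + L θ)/λ` `Q`-a.e. and the normalization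
`∫ ρᵢ dQ = 1`, then `β₁ = β₂` and `ρ₁ = ρ₂` `Q`-almost everywhere. -/
theorem erm_fdr_normalization_constant_unique
    {M : Type*} [MeasurableSpace M]
    (Q : Measure M) [IsProbabilityMeasure Q]
    (L : M → ℝ) (hL_meas : Measurable L) (hL_nonneg : ∀ θ, 0 ≤ L θ)
    (lam : ℝ) (hlam : 0 < lam)
    (f f' : ℝ → ℝ)
    (hf_conv : StrictConvexOn ℝ (Ioi 0) f)
    (hf_deriv : ∀ x ∈ Ioi (0 : ℝ), HasDerivAt f (f' x) x)
    (β₁ β₂ : ℝ) (ρ₁ ρ₂ : M → ℝ)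
    (hρ₁_meas : Measurable ρ₁) (hρ₂_meas : Measurable ρ₂)
    (hρ₁_pos : ∀ θ, 0 < ρ₁ θ) (hρ₂_pos : ∀ θ, 0 < ρ₂ θ)
    (hρ₁_eq : ∀ᵐ θ ∂Q, f' (ρ₁ θ) = -((β₁ + L θ) / lam))
    (hρ₂_eq : ∀ᵐ θ ∂Q, f' (ρ₂ θ) = -((β₂ + L θ) / lam))
    (hρ₁_norm : ∫ θ, ρ₁ θ ∂Q = 1)
    (hρ₂_norm : ∫ θ, ρ₂ θ ∂Q = 1) :
    β₁ = β₂ ∧ ρ₁ =ᵐ[Q] ρ₂ := by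
  have hmono : StrictMonoOn f' (Ioi 0) := fun x hx y hy hxy =>
    (hf_conv.lt_slope_of_hasDerivAt hx hy hxy (hf_deriv x hx)).trans
      (hf_conv.slope_lt_of_hasDerivAt hx hy hxy (hf_deriv y hy))
  have hβ : β₁ = β₂ := by
    rcases lt_trichotomy β₁ β₂ with h | h | h
    · exact absurd (erm_aux Q L lam hlam f' hmono β₁ β₂ ρ₁ ρ₂ hρ₁_pos hρ₂_pos
        hρ₁_eq hρ₂_eq hρ₁_norm hρ₂_norm h) id
    · exact h
    · exact absurd (erm_aux Q L lam hlam f' hmono β₂ β₁ ρ₂ ρ₁ hρ₂_pos hρ₁_pos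
        hρ₂_eq hρ₁_eq hρ₂_norm hρ₁_norm h) id
  refine ⟨hβ, ?_⟩
  filter_upwards [hρ₁_eq, hρ₂_eq] with θ h₁ h₂
  apply hmono.injOn (hρ₁_pos θ) (hρ₂_pos θ)
  rw [h₁, h₂, hβ]
end

section
/- Let Q be a probability measure on a measurable space M, let L : M → [0,∞) be measurable, and let f : (0,∞) → ℝ be strictly convex and differentiable. Let A ⊆ (0,∞) and N : A → ℝ be a function such that for every γ ∈ A there is a measurable ρ_γ : M → (0,∞) with f'(ρ_γ(θ)) = −(N(γ) + L(θ))/γ for Q-almost every θ and ∫ ρ_γ dQ = 1. Then N is continuous on A. -/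
open MeasureTheory Set Filter Topology Function

/-!
Put `c γ = N γ / γ`, so that `f' (ρ_γ) = -c γ - L / γ` almost everywhere and `N γ = γ * c γ`;
it suffices that `c` is continuous on `A`. Since `f'` is strictly increasing with an interval as
image (Darboux), shifting the value of `f'` at `ρ_γ₀` by `+ε` or `-ε` and inverting yields
measurable functions `F > ρ_γ₀ > G` with `∫ F > 1 > ∫ G`. For `γ` close to `γ₀` the term `L / γ`
moves by less than `ε / 2` on a sublevel set `{L ≤ K}`. If `c γ ≤ c γ₀ - ε`, then `ρ_γ ≥ F` on
`{L ≤ K}`, and for `K` so large that `F` has little mass on `{L > K}` this forces `∫ ρ_γ > 1`. If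
`c γ ≥ c γ₀ + ε`, then `ρ_γ ≤ G` on `{L ≤ K}`, while on `{L > K}` the bound
`f' (ρ_γ) ≤ -c γ₀ - K / (2 γ₀)` makes `ρ_γ` uniformly small; this forces `∫ ρ_γ < 1`.
-/

namespace StrictMonoOn

variable {α β : Type*} [LinearOrder α] [Nonempty α] [Preorder β] {φ : α → β} {s : Set α}
  {x : α} {y : β}

theorem invFunOn_le_iff (hφ : StrictMonoOn φ s) (hy : y ∈ φ '' s) (hx : x ∈ s) :
    invFunOn φ s y ≤ x ↔ y ≤ φ x := by
  rw [← hφ.le_iff_le (invFunOn_mem hy) hx, invFunOn_eq hy]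

theorem le_invFunOn_iff (hφ : StrictMonoOn φ s) (hy : y ∈ φ '' s) (hx : x ∈ s) :
    x ≤ invFunOn φ s y ↔ φ x ≤ y := by
  rw [← hφ.le_iff_le hx (invFunOn_mem hy), invFunOn_eq hy]

theorem invFunOn_lt_iff (hφ : StrictMonoOn φ s) (hy : y ∈ φ '' s) (hx : x ∈ s) :
    invFunOn φ s y < x ↔ y < φ x := by
  rw [← hφ.lt_iff_lt (invFunOn_mem hy) hx, invFunOn_eq hy]

theorem lt_invFunOn_iff (hφ : StrictMonoOn φ s) (hy : y ∈ φ '' s) (hx : x ∈ s) :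
    x < invFunOn φ s y ↔ φ x < y := by
  rw [← hφ.lt_iff_lt hx (invFunOn_mem hy), invFunOn_eq hy]

end StrictMonoOn

theorem StrictConvexOn.strictMonoOn_of_hasDerivAt {S : Set ℝ} {f f' : ℝ → ℝ}
    (hf : StrictConvexOn ℝ S f) (hf' : ∀ x ∈ S, HasDerivAt f (f' x) x) : StrictMonoOn f' S :=
  (hf.strictMonoOn_deriv fun x hx => (hf' x hx).differentiableAt).congr fun x hx =>
    (hf' x hx).deriv

section Comparison

open scoped Classical in
/-- The cap `2 * x` keeps `upperComparison φ ε ∘ ρ` integrable whenever `ρ` is. -/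
noncomputable def upperComparison (φ : ℝ → ℝ) (ε x : ℝ) : ℝ :=
  if φ x + ε ∈ φ '' Ioi 0 then min (invFunOn φ (Ioi 0) (φ x + ε)) (2 * x) else 2 * x

open scoped Classical in
noncomputable def lowerComparison (φ : ℝ → ℝ) (ε x : ℝ) : ℝ :=
  if φ x - ε ∈ φ '' Ioi 0 then invFunOn φ (Ioi 0) (φ x - ε) else 0

variable {φ : ℝ → ℝ} {ε x x' : ℝ}

theorem upperComparison_le_two_mul : upperComparison φ ε x ≤ 2 * x := by
  unfold upperComparison
  split_ifs
  exacts [min_le_right _ _, le_rfl]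

theorem lt_upperComparison (hφ : StrictMonoOn φ (Ioi 0)) (hε : 0 < ε) (hx : 0 < x) :
    x < upperComparison φ ε x := by
  unfold upperComparison
  split_ifs with hmem
  · exact lt_min ((hφ.lt_invFunOn_iff hmem hx).2 (by linarith)) (by linarith)
  · linarith

theorem upperComparison_le_of_add_le (hφ : StrictMonoOn φ (Ioi 0))
    (hR : (φ '' Ioi 0).OrdConnected) (hε : 0 ≤ ε) (hx : 0 < x) (hx' : 0 < x')
    (h : φ x + ε ≤ φ x') : upperComparison φ ε x ≤ x' := by
  have hmem : φ x + ε ∈ φ '' Ioi 0 :=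
    hR.out (mem_image_of_mem φ hx) (mem_image_of_mem φ hx') ⟨by linarith, h⟩
  rw [upperComparison, if_pos hmem]
  exact (min_le_left _ _).trans ((hφ.invFunOn_le_iff hmem hx').2 h)

theorem monotoneOn_upperComparison (hφ : StrictMonoOn φ (Ioi 0))
    (hR : (φ '' Ioi 0).OrdConnected) (hε : 0 ≤ ε) :
    MonotoneOn (upperComparison φ ε) (Ioi 0) := by
  intro x hx y hy hxy
  have hcap : upperComparison φ ε x ≤ 2 * y := upperComparison_le_two_mul.trans (by linarith)
  by_cases hmem : φ y + ε ∈ φ '' Ioi 0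
  · rw [upperComparison.eq_1 φ ε y, if_pos hmem]
    refine le_min (upperComparison_le_of_add_le hφ hR hε hx (invFunOn_mem hmem) ?_) hcap
    rw [invFunOn_eq hmem]
    linarith [hφ.monotoneOn hx hy hxy]
  · rwa [upperComparison.eq_1 φ ε y, if_neg hmem]

theorem lowerComparison_nonneg : 0 ≤ lowerComparison φ ε x := by
  unfold lowerComparison
  split_ifs with hmem
  exacts [le_of_lt (invFunOn_mem hmem), le_rfl]

theorem lowerComparison_lt (hφ : StrictMonoOn φ (Ioi 0)) (hε : 0 < ε) (hx : 0 < x) :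
    lowerComparison φ ε x < x := by
  unfold lowerComparison
  split_ifs with hmem
  · exact (hφ.invFunOn_lt_iff hmem hx).2 (by linarith)
  · exact hx

theorem le_lowerComparison_of_le_sub (hφ : StrictMonoOn φ (Ioi 0))
    (hR : (φ '' Ioi 0).OrdConnected) (hε : 0 ≤ ε) (hx : 0 < x) (hx' : 0 < x')
    (h : φ x' ≤ φ x - ε) : x' ≤ lowerComparison φ ε x := by
  have hmem : φ x - ε ∈ φ '' Ioi 0 :=
    hR.out (mem_image_of_mem φ hx') (mem_image_of_mem φ hx) ⟨h, by linarith⟩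
  rw [lowerComparison, if_pos hmem]
  exact (hφ.le_invFunOn_iff hmem hx').2 h

theorem monotoneOn_lowerComparison (hφ : StrictMonoOn φ (Ioi 0))
    (hR : (φ '' Ioi 0).OrdConnected) (hε : 0 ≤ ε) :
    MonotoneOn (lowerComparison φ ε) (Ioi 0) := by
  intro x hx y hy hxy
  by_cases hmem : φ x - ε ∈ φ '' Ioi 0
  · rw [lowerComparison, if_pos hmem]
    refine le_lowerComparison_of_le_sub hφ hR hε hy (invFunOn_mem hmem) ?_
    rw [invFunOn_eq hmem]
    linarith [hφ.monotoneOn hx hy hxy]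
  · rw [lowerComparison, if_neg hmem]
    exact lowerComparison_nonneg

end Comparison

section Integrals

variable {α : Type*} [MeasurableSpace α] {μ : Measure α}

theorem MonotoneOn.measurable_comp {s : Set ℝ} {Φ : ℝ → ℝ} (hΦ : MonotoneOn Φ s) {ρ : α → ℝ}
    (hρ : Measurable ρ) (hρs : ∀ a, ρ a ∈ s) : Measurable fun a => Φ (ρ a) :=
  have hmono : Monotone fun x : s => Φ x := fun x y hxy => hΦ x.2 y.2 hxy
  hmono.measurable.comp (hρ.subtype_mk (h := hρs))

theorem integral_lt_integral_of_forall_lt [NeZero μ] {f g : α → ℝ} (hf : Integrable f μ)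
    (hg : Integrable g μ) (h : ∀ a, f a < g a) : ∫ a, f a ∂μ < ∫ a, g a ∂μ := by
  have hsupp : Function.support (fun a => g a - f a) = univ :=
    eq_univ_of_forall fun a => sub_ne_zero.2 (h a).ne'
  rw [← sub_pos, ← integral_sub hg hf,
    integral_pos_iff_support_of_nonneg (fun a => sub_nonneg.2 (h a).le) (hg.sub hf), hsupp]
  exact NeZero.pos _

theorem MeasureTheory.Integrable.exists_setIntegral_setOf_lt_lt {w L : α → ℝ} (hw : Integrable w μ)
    (hL : Measurable L) {η : ℝ} (hη : 0 < η) : ∃ K, ∫ a in {a | K < L a}, w a ∂μ < η := by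
  have hanti : Antitone fun K : ℝ => {a | K < L a} := fun K K' hKK' a ha => hKK'.trans_lt ha
  have hempty : ⋂ K : ℝ, {a | K < L a} = ∅ :=
    eq_empty_of_forall_notMem fun a ha => lt_irrefl (L a) (mem_iInter.1 ha (L a))
  have htendsto := tendsto_setIntegral_of_antitone (fun K => measurableSet_lt measurable_const hL)
    hanti ⟨0, hw.integrableOn⟩
  rw [hempty, setIntegral_empty] at htendsto
  exact (htendsto.eventually_lt_const hη).exists

end Integrals

section DensityComparison

variable {α : Type*} [MeasurableSpace α] {μ : Measure α} {φ : ℝ → ℝ} {ρ₀ : α → ℝ} {ε : ℝ}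

theorem exists_integral_lt_of_add_le_on_sublevel [NeZero μ] (hφ : StrictMonoOn φ (Ioi 0))
    (hR : (φ '' Ioi 0).OrdConnected) (hε : 0 < ε) (hρ₀ : Measurable ρ₀)
    (hρ₀_pos : ∀ a, 0 < ρ₀ a) (hρ₀_int : Integrable ρ₀ μ) {L : α → ℝ} (hL : Measurable L) :
    ∃ K, ∀ ρ : α → ℝ, Integrable ρ μ → (∀ a, 0 < ρ a) →
      (∀ᵐ a ∂μ, L a ≤ K → φ (ρ₀ a) + ε ≤ φ (ρ a)) → ∫ a, ρ₀ a ∂μ < ∫ a, ρ a ∂μ := by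
  set F := fun a => upperComparison φ ε (ρ₀ a)
  have hF_int : Integrable F μ := by
    refine (hρ₀_int.const_mul 2).mono'
      ((monotoneOn_upperComparison hφ hR hε.le).measurable_comp hρ₀ hρ₀_pos).aestronglyMeasurable
      (ae_of_all _ fun a => ?_)
    rw [Real.norm_of_nonneg ((hρ₀_pos a).trans (lt_upperComparison hφ hε (hρ₀_pos a))).le]
    exact upperComparison_le_two_mul
  have hgap : ∫ a, ρ₀ a ∂μ < ∫ a, F a ∂μ :=
    integral_lt_integral_of_forall_lt hρ₀_int hF_int fun a => lt_upperComparison hφ hε (hρ₀_pos a)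
  obtain ⟨K, hK⟩ := hF_int.exists_setIntegral_setOf_lt_lt hL (sub_pos.2 hgap)
  refine ⟨K, fun ρ hρ_int hρ_pos hρ => ?_⟩
  have hT : MeasurableSet {a | K < L a} := measurableSet_lt measurable_const hL
  have hF_le_ρ : ∫ a in {a | K < L a}ᶜ, F a ∂μ ≤ ∫ a in {a | K < L a}ᶜ, ρ a ∂μ :=
    setIntegral_mono_on_ae hF_int.integrableOn hρ_int.integrableOn hT.compl <|
      hρ.mono fun a ha haT => upperComparison_le_of_add_le hφ hR hε.le (hρ₀_pos a) (hρ_pos a)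
        (ha (not_lt.1 haT))
  have hρ_le : ∫ a in {a | K < L a}ᶜ, ρ a ∂μ ≤ ∫ a, ρ a ∂μ :=
    setIntegral_le_integral hρ_int (ae_of_all _ fun a => (hρ_pos a).le)
  linarith [integral_add_compl hT hF_int]

theorem exists_integral_lt_of_le_sub_or_le [IsFiniteMeasure μ] [NeZero μ]
    (hφ : StrictMonoOn φ (Ioi 0)) (hR : (φ '' Ioi 0).OrdConnected) (hε : 0 < ε)
    (hρ₀ : Measurable ρ₀) (hρ₀_pos : ∀ a, 0 < ρ₀ a) (hρ₀_int : Integrable ρ₀ μ) :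
    ∃ δ > 0, ∀ ρ : α → ℝ, Integrable ρ μ → (∀ a, 0 < ρ a) →
      (∀ᵐ a ∂μ, φ (ρ a) ≤ φ (ρ₀ a) - ε ∨ ρ a ≤ δ) → ∫ a, ρ a ∂μ < ∫ a, ρ₀ a ∂μ := by
  set G := fun a => lowerComparison φ ε (ρ₀ a)
  have hG_int : Integrable G μ := by
    refine hρ₀_int.mono'
      ((monotoneOn_lowerComparison hφ hR hε.le).measurable_comp hρ₀ hρ₀_pos).aestronglyMeasurable
      (ae_of_all _ fun a => ?_)
    rw [Real.norm_of_nonneg lowerComparison_nonneg]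
    exact (lowerComparison_lt hφ hε (hρ₀_pos a)).le
  have hgap : ∫ a, G a ∂μ < ∫ a, ρ₀ a ∂μ :=
    integral_lt_integral_of_forall_lt hG_int hρ₀_int fun a => lowerComparison_lt hφ hε (hρ₀_pos a)
  obtain ⟨δ, hδ, hδμ⟩ := exists_pos_mul_lt (sub_pos.2 hgap) (μ.real univ)
  refine ⟨δ, hδ, fun ρ hρ_int hρ_pos hρ => ?_⟩
  have hρ_le : ∀ᵐ a ∂μ, ρ a ≤ G a + δ := hρ.mono fun a ha => ha.elim
    (fun h => (le_lowerComparison_of_le_sub hφ hR hε.le (hρ₀_pos a) (hρ_pos a) h).trans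
      (le_add_of_nonneg_right hδ.le))
    (fun h => h.trans (le_add_of_nonneg_left lowerComparison_nonneg))
  calc ∫ a, ρ a ∂μ ≤ ∫ a, (G a + δ) ∂μ :=
        integral_mono_ae hρ_int (hG_int.add (integrable_const δ)) hρ_le
    _ = ∫ a, G a ∂μ + μ.real univ * δ := by
        rw [integral_add hG_int (integrable_const δ), integral_const, smul_eq_mul]
    _ < ∫ a, ρ₀ a ∂μ := by linarith

end DensityComparison

theorem eventually_abs_inv_sub_inv_mul_lt {γ₀ : ℝ} (hγ₀ : γ₀ ≠ 0) (K : ℝ) {η : ℝ} (hη : 0 < η) :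
    ∀ᶠ γ in 𝓝 γ₀, |γ⁻¹ - γ₀⁻¹| * K < η := by
  have hcont : ContinuousAt (fun γ => |γ⁻¹ - γ₀⁻¹| * K) γ₀ := by fun_prop (disch := exact hγ₀)
  exact hcont.tendsto.eventually_lt_const (by simpa using hη)

section Normalization

variable {M : Type*} [MeasurableSpace M] {Q : Measure M} [NeZero Q]
  {L : M → ℝ} {φ : ℝ → ℝ} {A : Set ℝ} {N : ℝ → ℝ} {γ₀ : ℝ}

theorem eventually_lt_div_self (hL : Measurable L) (hL_nonneg : ∀ θ, 0 ≤ L θ)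
    (hφ : StrictMonoOn φ (Ioi 0)) (hR : (φ '' Ioi 0).OrdConnected) (hA : A ⊆ Ioi 0)
    (hN : ∀ γ ∈ A, ∃ ρ : M → ℝ, Measurable ρ ∧ (∀ θ, 0 < ρ θ) ∧
      (∀ᵐ θ ∂Q, φ (ρ θ) = -((N γ + L θ) / γ)) ∧ ∫ θ, ρ θ ∂Q = 1)
    (hγ₀ : γ₀ ∈ A) {a : ℝ} (ha : a < N γ₀ / γ₀) : ∀ᶠ γ in 𝓝[A] γ₀, a < N γ / γ := by
  obtain ⟨ρ₀, hρ₀, hρ₀_pos, hρ₀_eq, hρ₀_one⟩ := hN γ₀ hγ₀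
  have hρ₀_int : Integrable ρ₀ Q := .of_integral_ne_zero (by simp [hρ₀_one])
  have hε : 0 < (N γ₀ / γ₀ - a) / 2 := half_pos (sub_pos.2 ha)
  obtain ⟨K, hK⟩ := exists_integral_lt_of_add_le_on_sublevel hφ hR hε hρ₀ hρ₀_pos hρ₀_int hL
  filter_upwards [self_mem_nhdsWithin,
    nhdsWithin_le_nhds (eventually_abs_inv_sub_inv_mul_lt (hA hγ₀).ne' K hε)] with γ hγ hγK
  by_contra! hle
  obtain ⟨ρ, -, hρ_pos, hρ_eq, hρ_one⟩ := hN γ hγ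
  refine (hK ρ (.of_integral_ne_zero (by simp [hρ_one])) hρ_pos ?_).ne (hρ₀_one.trans hρ_one.symm)
  filter_upwards [hρ₀_eq, hρ_eq] with θ h₀ h hθ
  have hdrift : (γ⁻¹ - γ₀⁻¹) * L θ ≤ |γ⁻¹ - γ₀⁻¹| * K :=
    (mul_le_mul_of_nonneg_right (le_abs_self _) (hL_nonneg θ)).trans
      (mul_le_mul_of_nonneg_left hθ (abs_nonneg _))
  have hsplit : ∀ g, -((N g + L θ) / g) = -(N g / g) - g⁻¹ * L θ := fun g => by ring
  rw [h₀, h, hsplit, hsplit]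
  linarith

theorem eventually_div_self_lt [IsFiniteMeasure Q] (hL_nonneg : ∀ θ, 0 ≤ L θ)
    (hφ : StrictMonoOn φ (Ioi 0)) (hR : (φ '' Ioi 0).OrdConnected) (hA : A ⊆ Ioi 0)
    (hN : ∀ γ ∈ A, ∃ ρ : M → ℝ, Measurable ρ ∧ (∀ θ, 0 < ρ θ) ∧
      (∀ᵐ θ ∂Q, φ (ρ θ) = -((N γ + L θ) / γ)) ∧ ∫ θ, ρ θ ∂Q = 1)
    (hγ₀ : γ₀ ∈ A) {b : ℝ} (hb : N γ₀ / γ₀ < b) : ∀ᶠ γ in 𝓝[A] γ₀, N γ / γ < b := by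
  obtain ⟨ρ₀, hρ₀, hρ₀_pos, hρ₀_eq, hρ₀_one⟩ := hN γ₀ hγ₀
  have hρ₀_int : Integrable ρ₀ Q := .of_integral_ne_zero (by simp [hρ₀_one])
  have hγ₀_pos : 0 < γ₀ := hA hγ₀
  have hε : 0 < (b - N γ₀ / γ₀) / 2 := half_pos (sub_pos.2 hb)
  obtain ⟨δ, hδ, hδ_spec⟩ := exists_integral_lt_of_le_sub_or_le hφ hR hε hρ₀ hρ₀_pos hρ₀_int
  -- beyond this level of `L`, the density is at most `δ` for every `γ` near `γ₀`
  obtain ⟨K, hK⟩ : ∃ K, γ₀⁻¹ / 2 * K = -φ δ - N γ₀ / γ₀ :=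
    ⟨2 * γ₀ * (-φ δ - N γ₀ / γ₀), by field_simp⟩
  have hinv : ∀ᶠ γ in 𝓝 γ₀, γ₀⁻¹ / 2 < γ⁻¹ :=
    ((continuousAt_inv₀ hγ₀_pos.ne').tendsto).eventually_const_lt
      (half_lt_self (inv_pos.2 hγ₀_pos))
  filter_upwards [self_mem_nhdsWithin, nhdsWithin_le_nhds hinv,
    nhdsWithin_le_nhds (eventually_abs_inv_sub_inv_mul_lt hγ₀_pos.ne' K hε)]
    with γ hγ hγ_inv hγK
  by_contra! hle
  obtain ⟨ρ, -, hρ_pos, hρ_eq, hρ_one⟩ := hN γ hγ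
  refine (hδ_spec ρ (.of_integral_ne_zero (by simp [hρ_one])) hρ_pos ?_).ne
    (hρ_one.trans hρ₀_one.symm)
  filter_upwards [hρ₀_eq, hρ_eq] with θ h₀ h
  have hsplit : ∀ g, -((N g + L θ) / g) = -(N g / g) - g⁻¹ * L θ := fun g => by ring
  rcases le_or_gt (L θ) K with hθ | hθ
  · left
    have hdrift : (γ₀⁻¹ - γ⁻¹) * L θ ≤ |γ⁻¹ - γ₀⁻¹| * K :=
      (mul_le_mul_of_nonneg_right ((le_abs_self _).trans_eq (abs_sub_comm _ _))
        (hL_nonneg θ)).trans (mul_le_mul_of_nonneg_left hθ (abs_nonneg _))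
    rw [h₀, h, hsplit, hsplit]
    linarith
  · right
    have hdecay : γ₀⁻¹ / 2 * K ≤ γ⁻¹ * L θ :=
      (mul_le_mul_of_nonneg_left hθ.le (by positivity)).trans
        (mul_le_mul_of_nonneg_right hγ_inv.le (hL_nonneg θ))
    rw [← hφ.le_iff_le (hρ_pos θ) hδ, h, hsplit]
    linarith

end Normalization

/-- **Lemma 1 (second part): the normalization function is continuous.**
Let `A ⊆ (0,∞)` be a set of permissible regularization factors and `N : A → ℝ` be
such that for every `γ ∈ A` there is a measurable, strictly positive density `ρ_γ`
with `f' (ρ_γ θ) = -(N γ + L θ)/γ` `Q`-a.e. and `∫ ρ_γ dQ = 1`.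
Then `N` is continuous on `A`. -/
theorem erm_fdr_normalization_function_continuousOn
    {M : Type*} [MeasurableSpace M]
    (Q : Measure M) [IsProbabilityMeasure Q]
    (L : M → ℝ) (hL_meas : Measurable L) (hL_nonneg : ∀ θ, 0 ≤ L θ)
    (f f' : ℝ → ℝ)
    (hf_conv : StrictConvexOn ℝ (Ioi 0) f)
    (hf_deriv : ∀ x ∈ Ioi (0 : ℝ), HasDerivAt f (f' x) x)
    (A : Set ℝ) (hA : A ⊆ Ioi 0)
    (N : ℝ → ℝ)
    (hN : ∀ γ ∈ A, ∃ ρ : M → ℝ, Measurable ρ ∧ (∀ θ, 0 < ρ θ) ∧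
      (∀ᵐ θ ∂Q, f' (ρ θ) = -((N γ + L θ) / γ)) ∧ ∫ θ, ρ θ ∂Q = 1) :
    ContinuousOn N A := by
  have hφ : StrictMonoOn f' (Ioi 0) := hf_conv.strictMonoOn_of_hasDerivAt hf_deriv
  have hR : (f' '' Ioi 0).OrdConnected :=
    ordConnected_Ioi.image_hasDerivWithinAt fun x hx => (hf_deriv x hx).hasDerivWithinAt
  intro γ₀ hγ₀
  have hc : ContinuousWithinAt (fun γ => N γ / γ) A γ₀ := tendsto_order.2
    ⟨fun a ha => eventually_lt_div_self hL_meas hL_nonneg hφ hR hA hN hγ₀ ha,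
      fun b hb => eventually_div_self_lt hL_nonneg hφ hR hA hN hγ₀ hb⟩
  exact (continuousWithinAt_id.mul hc).congr (fun γ hγ => (mul_div_cancel₀ _ (hA hγ).ne').symm)
    (mul_div_cancel₀ _ (hA hγ₀).ne').symm
end

section
/- Let Q be a probability measure on a measurable space M, let L : M → [0,∞) be measurable, and let λ > 0. Assume 0 < ∫ exp(−L(θ)/λ) dQ(θ) < ∞, and let P* be the probability measure with density dP*/dQ(θ) = exp(−L(θ)/λ) / ∫ exp(−L(ν)/λ) dQ(ν) with respect to Q, and assume ∫ L dP* + λ ∫ (dP*/dQ)·log(dP*/dQ) dQ is finite. Then P* is the unique minimizer of P ↦ ∫ L dP + λ ∫ (dP/dQ)·log(dP/dQ) dQ over all probability measures P ≪ Q: for any such P with P ≠ P*, the objective at P (taken as +∞ when not finite) is strictly greater than the objective at P*. -/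
open MeasureTheory Real Set InformationTheory

/-!
Write `Z = ∫ exp (-L/λ) dQ`, so that `P*` is the exponentially tilted measure `Q.tilted (-L/λ)`.
Since `log (dP*/dQ) = -L/λ - log Z`, for every probability measure `P ≪ Q` the objective splits as
`∫ L dP + λ KL(P‖Q) = λ KL(P‖P*) - λ log Z`. Its minimum `-λ log Z` is attained at `P*`, and only
there, because the Kullback–Leibler divergence of probability measures vanishes only on the
diagonal (converse Gibbs inequality).
-/

namespace MeasureTheory

variable {α : Type*} {mα : MeasurableSpace α} {μ ν : Measure α}

lemma integral_llr_pos_of_ne [IsProbabilityMeasure μ] [IsProbabilityMeasure ν] (hμν : μ ≪ ν)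
    (h_int : Integrable (llr μ ν) μ) (hne : μ ≠ ν) : 0 < ∫ x, llr μ ν x ∂μ := by
  have h_kl : (klDiv μ ν).toReal = ∫ x, llr μ ν x ∂μ := by
    simp [toReal_klDiv hμν h_int]
  rw [← h_kl]
  exact ENNReal.toReal_pos (mt klDiv_eq_zero_iff.1 hne)
    (klDiv_ne_top hμν h_int)

lemma toReal_rnDeriv_tilted_left_self [SigmaFinite μ] {f : α → ℝ} (hf : AEMeasurable f μ) :
    (fun x ↦ ((μ.tilted f).rnDeriv μ x).toReal) =ᵐ[μ] fun x ↦ exp (f x) / ∫ x, exp (f x) ∂μ := by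
  filter_upwards [rnDeriv_tilted_left_self hf] with x hx
  rw [hx, ENNReal.toReal_ofReal (by positivity)]

section GibbsVariational

variable {L : α → ℝ} {lam : ℝ}

lemma integral_add_mul_integral_llr_eq [IsProbabilityMeasure μ] [SigmaFinite ν] (hlam : lam ≠ 0)
    (hμν : μ ≪ ν) (hL : Integrable L μ) (hexp : Integrable (fun x ↦ exp (-L x / lam)) ν)
    (h_int : Integrable (llr μ ν) μ) :
    ∫ x, L x ∂μ + lam * ∫ x, llr μ ν x ∂μ =
      lam * ∫ x, llr μ (ν.tilted fun x ↦ -L x / lam) x ∂μ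
        - lam * log (∫ x, exp (-L x / lam) ∂ν) := by
  rw [integral_llr_tilted_right (f := fun x ↦ -L x / lam) hμν (hL.neg.div_const lam) hexp h_int,
    integral_div, integral_neg]
  field_simp
  ring

lemma integral_add_mul_integral_llr_tilted_self [IsProbabilityMeasure ν] (hlam : lam ≠ 0)
    (hexp : Integrable (fun x ↦ exp (-L x / lam)) ν)
    (hL : Integrable L (ν.tilted fun x ↦ -L x / lam))
    (h_int : Integrable (llr (ν.tilted fun x ↦ -L x / lam) ν) (ν.tilted fun x ↦ -L x / lam)) :
    ∫ x, L x ∂(ν.tilted fun x ↦ -L x / lam)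
        + lam * ∫ x, llr (ν.tilted fun x ↦ -L x / lam) ν x ∂(ν.tilted fun x ↦ -L x / lam) =
      -(lam * log (∫ x, exp (-L x / lam) ∂ν)) := by
  have := isProbabilityMeasure_tilted hexp
  rw [integral_add_mul_integral_llr_eq hlam (tilted_absolutelyContinuous ν _) hL hexp h_int,
    integral_congr_ae (llr_self _)]
  simp

end GibbsVariational

end MeasureTheory

theorem erm_kl_regularization_gibbs_unique_general
    {M : Type*} [MeasurableSpace M]
    (Q : Measure M) [IsProbabilityMeasure Q]
    (L : M → ℝ)
    (lam : ℝ) (hlam : 0 < lam)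
    (hZ_int : Integrable (fun θ => Real.exp (-(L θ) / lam)) Q)
    (ρ : M → ℝ)
    (hρ : ∀ θ, ρ θ =
      Real.exp (-(L θ) / lam) / ∫ ν, Real.exp (-(L ν) / lam) ∂Q)
    (Pstar : Measure M)
    (hPstar : Pstar = Q.withDensity (fun θ => ENNReal.ofReal (ρ θ)))
    (hL_int : Integrable L Pstar)
    (hf_int : Integrable (fun θ => ρ θ * Real.log (ρ θ)) Q) :
    IsProbabilityMeasure Pstar ∧
      ∀ P : Measure M, IsProbabilityMeasure P → P ≪ Q → P ≠ Pstar →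
        (Integrable L P →
          Integrable
            (fun θ => ((P.rnDeriv Q θ).toReal) * Real.log ((P.rnDeriv Q θ).toReal)) Q →
          ∫ θ, L θ ∂Pstar + lam * ∫ θ, ρ θ * Real.log (ρ θ) ∂Q <
            ∫ θ, L θ ∂P +
              lam * ∫ θ, ((P.rnDeriv Q θ).toReal) * Real.log ((P.rnDeriv Q θ).toReal) ∂Q) := by
  obtain rfl : Pstar = Q.tilted fun θ ↦ -L θ / lam := by
    rw [hPstar, Measure.tilted]
    simp_rw [hρ]
  set Pstar := Q.tilted fun θ ↦ -L θ / lam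
  have hPstar_ac : Pstar ≪ Q := tilted_absolutelyContinuous Q _
  have h_mul_log_ae : (fun θ ↦ (Pstar.rnDeriv Q θ).toReal * log (Pstar.rnDeriv Q θ).toReal)
      =ᵐ[Q] fun θ ↦ ρ θ * log (ρ θ) := by
    filter_upwards [toReal_rnDeriv_tilted_left_self
      (aemeasurable_of_aemeasurable_exp hZ_int.aemeasurable)] with θ hθ
    rw [hθ, ← hρ]
  have h_star := integral_add_mul_integral_llr_tilted_self hlam.ne' hZ_int hL_int
    ((integrable_rnDeriv_mul_log_iff hPstar_ac).1 (hf_int.congr h_mul_log_ae.symm))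
  rw [← integral_rnDeriv_mul_log hPstar_ac, integral_congr_ae h_mul_log_ae] at h_star
  have hPstar_prob : IsProbabilityMeasure Pstar := isProbabilityMeasure_tilted hZ_int
  refine ⟨hPstar_prob, fun P hP hPQ hne hLP hP_int ↦ ?_⟩
  have h_llr : Integrable (llr P Q) P := (integrable_rnDeriv_mul_log_iff hPQ).1 hP_int
  have h_kl : 0 < ∫ θ, llr P Pstar θ ∂P :=
    integral_llr_pos_of_ne (hPQ.trans (absolutelyContinuous_tilted hZ_int))
      (integrable_llr_tilted_right hPQ (hLP.neg.div_const lam) h_llr hZ_int) hne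
  rw [integral_rnDeriv_mul_log hPQ, integral_add_mul_integral_llr_eq hlam.ne' hPQ hLP hZ_int h_llr,
    h_star]
  linarith [mul_pos hlam h_kl]

/-- **Type-I relative entropy regularization (Kullback–Leibler divergence,
`f x = x log x`): the Gibbs measure is the unique solution.**
If `0 < ∫ exp (-L/λ) dQ < ∞` and `P*` is the Gibbs measure with density
`ρ θ = exp (-L θ / λ) / ∫ exp (-L ν / λ) dQ(ν)` with respect to `Q`, then `P*` is
the unique minimizer of `P ↦ ∫ L dP + λ ∫ (dP/dQ) log (dP/dQ) dQ` over probability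
measures `P ≪ Q` (the objective being `+∞` when not finite). -/
theorem erm_kl_regularization_gibbs_unique
    {M : Type*} [MeasurableSpace M]
    (Q : Measure M) [IsProbabilityMeasure Q]
    (L : M → ℝ) (hL_meas : Measurable L) (hL_nonneg : ∀ θ, 0 ≤ L θ)
    (lam : ℝ) (hlam : 0 < lam)
    (hZ_int : Integrable (fun θ => Real.exp (-(L θ) / lam)) Q)
    (hZ_pos : 0 < ∫ θ, Real.exp (-(L θ) / lam) ∂Q)
    (ρ : M → ℝ)
    (hρ : ∀ θ, ρ θ =
      Real.exp (-(L θ) / lam) / ∫ ν, Real.exp (-(L ν) / lam) ∂Q)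
    (Pstar : Measure M)
    (hPstar : Pstar = Q.withDensity (fun θ => ENNReal.ofReal (ρ θ)))
    (hL_int : Integrable L Pstar)
    (hf_int : Integrable (fun θ => ρ θ * Real.log (ρ θ)) Q) :
    IsProbabilityMeasure Pstar ∧
      ∀ P : Measure M, IsProbabilityMeasure P → P ≪ Q → P ≠ Pstar →
        (Integrable L P →
          Integrable
            (fun θ => ((P.rnDeriv Q θ).toReal) * Real.log ((P.rnDeriv Q θ).toReal)) Q →
          ∫ θ, L θ ∂Pstar + lam * ∫ θ, ρ θ * Real.log (ρ θ) ∂Q <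
            ∫ θ, L θ ∂P +
              lam * ∫ θ, ((P.rnDeriv Q θ).toReal) * Real.log ((P.rnDeriv Q θ).toReal) ∂Q) :=
  erm_kl_regularization_gibbs_unique_general Q L lam hlam hZ_int ρ hρ Pstar hPstar hL_int hf_int
end

section
/- The integral ∫₀^∞ 4θ²·exp(−2θ)/(θ − 1)² dθ diverges (equals +∞). Consequently, for the reverse relative entropy regularization (f(x) = −log x) with reference probability measure Q having Lebesgue density 4θ²·exp(−2θ) on [0,∞) and risk function L(θ) = (θ − 1)², the condition ∫ 1/(L(θ) + t*) dQ(θ) < ∞ fails at t* = 0, so t*_{Q,z} = 0 does not belong to the set B and B = (0, ∞) is open from the left. -/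
/-!
Near `θ = 1` the density `4 θ² e^{-2θ}` is bounded below by `4 e^{-4}`, while `(θ - 1)⁻²` is
not integrable at `1`; hence the normalization integral at `t = 0` diverges. For `t > 0` the
integrand is bounded by `1 / t` and `Q` is the Gamma(3, 2) probability law. For `t < 0` the
candidate density is negative on a neighbourhood of `1`, which has positive `Q`-mass because `Q`
has a positive density on `(0, ∞)`. Hence `B = (0, ∞)`.
-/

open MeasureTheory Real Set ProbabilityTheory

lemma lintegral_ofReal_inv_sq_sub_Ioo_eq_top {a b : ℝ} (hab : a < b) :
    ∫⁻ x in Ioo a b, ENNReal.ofReal (((x - a) ^ 2)⁻¹) = ⊤ := by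
  have hshift := (measurePreserving_add_right volume a).setLIntegral_comp_emb
    (measurableEmbedding_addRight a) (fun x => ENNReal.ofReal (((x - a) ^ 2)⁻¹)) (Ioo 0 (b - a))
  rw [image_add_const_Ioo, zero_add, sub_add_cancel] at hshift
  simp only [add_sub_cancel_right] at hshift
  rw [← hshift, ← not_ne_iff, lintegral_ofReal_ne_top_iff_integrable
    (by fun_prop) (.of_forall fun x => by positivity)]
  intro hint
  have hrpow : IntegrableOn (fun x : ℝ => x ^ (-2 : ℝ)) (Ioo 0 (b - a)) :=
    IntegrableOn.congr_fun hint (fun x hx => by rw [rpow_neg hx.1.le, rpow_two]) measurableSet_Ioo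
  rw [intervalIntegral.integrableOn_Ioo_rpow_iff (sub_pos.2 hab)] at hrpow
  norm_num at hrpow

lemma setLIntegral_ofReal_div_sq_sub_eq_top {g : ℝ → ℝ} {s : Set ℝ} {a b c : ℝ} (hab : a < b)
    (hs : Ioo a b ⊆ s) (hc : 0 < c) (hg : ∀ x ∈ Ioo a b, c ≤ g x) :
    ∫⁻ x in s, ENNReal.ofReal (g x / (x - a) ^ 2) = ⊤ := by
  refine eq_top_iff.2 ?_
  calc ⊤ = ENNReal.ofReal c * ∫⁻ x in Ioo a b, ENNReal.ofReal (((x - a) ^ 2)⁻¹) := by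
        rw [lintegral_ofReal_inv_sq_sub_Ioo_eq_top hab, ENNReal.mul_top (by simpa using hc)]
    _ = ∫⁻ x in Ioo a b, ENNReal.ofReal (c / (x - a) ^ 2) := by
        rw [← lintegral_const_mul' _ _ ENNReal.ofReal_ne_top]
        simp only [← ENNReal.ofReal_mul hc.le, div_eq_mul_inv]
    _ ≤ ∫⁻ x in Ioo a b, ENNReal.ofReal (g x / (x - a) ^ 2) :=
        setLIntegral_mono' measurableSet_Ioo fun x hx =>
          ENNReal.ofReal_le_ofReal (div_le_div_of_nonneg_right (hg x hx) (sq_nonneg _))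
    _ ≤ _ := lintegral_mono_set hs

lemma lintegral_ofReal_one_div_add_lt_top {X : Type*} [MeasurableSpace X] {ν : Measure X}
    [IsFiniteMeasure ν] {L : X → ℝ} (hL : ∀ x, 0 ≤ L x) {t : ℝ} (ht : 0 < t) :
    ∫⁻ x, ENNReal.ofReal (1 / (L x + t)) ∂ν < ⊤ :=
  calc ∫⁻ x, ENNReal.ofReal (1 / (L x + t)) ∂ν
      ≤ ∫⁻ _, ENNReal.ofReal (1 / t) ∂ν :=
        lintegral_mono fun x => ENNReal.ofReal_le_ofReal <|
          one_div_le_one_div_of_le ht (le_add_of_nonneg_left (hL x))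
    _ = ENNReal.ofReal (1 / t) * ν univ := lintegral_const _
    _ < ⊤ := ENNReal.mul_lt_top ENNReal.ofReal_lt_top (measure_lt_top ν univ)

lemma not_ae_pos_of_neg {X : Type*} [TopologicalSpace X] [MeasurableSpace X]
    [OpensMeasurableSpace X] {μ ν : Measure X} [μ.IsOpenPosMeasure] {U : Set X} (hU : IsOpen U)
    (hμν : μ.restrict U ≪ ν) {f : X → ℝ} (hf : Continuous f) {x₀ : X} (hx₀ : x₀ ∈ U)
    (hfx₀ : f x₀ < 0) : ¬ ∀ᵐ x ∂ν, 0 < f x := by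
  intro hae
  have hV : IsOpen (U ∩ {x | f x < 0}) := hU.inter (isOpen_lt hf continuous_const)
  have hnull : ν (U ∩ {x | f x < 0}) = 0 :=
    measure_mono_null (fun x hx => not_lt.2 hx.2.le) (ae_iff.1 hae)
  have hpos : μ.restrict U (U ∩ {x | f x < 0}) ≠ 0 := by
    rw [Measure.restrict_apply hV.measurableSet, inter_eq_left.2 inter_subset_left]
    exact (hV.measure_pos μ ⟨x₀, hx₀, hfx₀⟩).ne'
  exact hpos (hμν hnull)

lemma absolutelyContinuous_gammaMeasure {a r : ℝ} (ha : 0 < a) (hr : 0 < r) :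
    volume.restrict (Ioi 0) ≪ gammaMeasure a r := by
  refine .trans ?_ (Measure.restrict_le_self (s := Ioi 0)).absolutelyContinuous
  rw [gammaMeasure, restrict_withDensity measurableSet_Ioi]
  refine withDensity_absolutelyContinuous' (by unfold gammaPDF; fun_prop) ?_
  refine (ae_restrict_iff' measurableSet_Ioi).2 (.of_forall fun x hx => ?_)
  simpa [gammaPDF] using gammaPDFReal_pos ha hr hx

lemma restrict_Ici_withDensity_eq_gammaMeasure :
    (volume.restrict (Ici (0 : ℝ))).withDensity
      (fun θ => ENNReal.ofReal (4 * θ ^ 2 * Real.exp (-(2 * θ)))) = gammaMeasure 3 2 := by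
  rw [gammaMeasure, ← withDensity_indicator measurableSet_Ici]
  congr 1
  funext θ
  by_cases hθ : 0 ≤ θ
  · rw [indicator_of_mem (mem_Ici.2 hθ), gammaPDF_of_nonneg hθ, Gamma_ofNat_eq_factorial]
    have h2 : (2 : ℝ) ^ (3 : ℝ) = 8 := by norm_num [show (3 : ℝ) = (3 : ℕ) by norm_num]
    have hθ2 : θ ^ ((3 : ℝ) - 1) = θ ^ 2 := by norm_num [show (2 : ℝ) = (2 : ℕ) by norm_num]
    rw [h2, hθ2]
    norm_num [Nat.factorial]
  · rw [indicator_of_notMem (mt mem_Ici.1 hθ), gammaPDF_of_neg (not_le.1 hθ)]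

lemma setOf_ae_pos_add_and_lintegral_lt_top_eq_Ioi {X : Type*} [TopologicalSpace X]
    [MeasurableSpace X] [OpensMeasurableSpace X] {μ ν : Measure X} [μ.IsOpenPosMeasure]
    [IsFiniteMeasure ν] {U : Set X} (hU : IsOpen U) (hμν : μ.restrict U ≪ ν) {L : X → ℝ}
    (hL : Continuous L) (hL_nonneg : ∀ x, 0 ≤ L x) {x₀ : X} (hx₀ : x₀ ∈ U) (hLx₀ : L x₀ = 0)
    (hdiv : ∫⁻ x, ENNReal.ofReal (1 / L x) ∂ν = ⊤) :
    {t : ℝ | (∀ᵐ x ∂ν, 0 < L x + t) ∧ ∫⁻ x, ENNReal.ofReal (1 / (L x + t)) ∂ν < ⊤} = Ioi 0 := by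
  ext t
  simp only [mem_ofPred_eq, mem_Ioi]
  constructor
  · rintro ⟨hpos, hfin⟩
    rcases lt_trichotomy t 0 with ht | rfl | ht
    · exact absurd hpos <| not_ae_pos_of_neg hU hμν (hL.add continuous_const) hx₀ (by simpa [hLx₀])
    · simp only [add_zero] at hfin
      exact absurd hdiv hfin.ne
    · exact ht
  · intro ht
    exact ⟨.of_forall fun x => add_pos_of_nonneg_of_pos (hL_nonneg x) ht,
      lintegral_ofReal_one_div_add_lt_top hL_nonneg ht⟩

/-- **Example 2: the set `B` is open from the left.**
The integral `∫₀^∞ 4 θ² exp (-2θ) / (θ - 1)² dθ` diverges (equals `+∞`).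
Consequently, for the reverse relative entropy regularization (`f x = -log x`) with
reference probability measure `Q` having Lebesgue density `4 θ² exp (-2θ)` on
`[0,∞)` and risk function `L θ = (θ - 1)²` (dataset `(x, y) = (1, 1)`), the
condition `∫ 1/(L θ + t*) dQ(θ) < ∞` fails at `t* = 0`, so `0 = t* = inf B` does
not belong to `B` and `B = (0, ∞)` is open from the left (here `B` is the set of
`t` for which the candidate density `θ ↦ γ/(L θ + t)` is a.e. strictly positive
and has finite integral with respect to `Q`). -/
theorem erm_reverse_kl_example_B_open
    (Q : Measure ℝ) (L : ℝ → ℝ)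
    (hQ : Q = (volume.restrict (Ici (0 : ℝ))).withDensity
      (fun θ => ENNReal.ofReal (4 * θ ^ 2 * Real.exp (-(2 * θ)))))
    (hL : ∀ θ, L θ = (θ - 1) ^ 2)
    (B : Set ℝ)
    (hB : B = {t : ℝ | (∀ᵐ θ ∂Q, 0 < L θ + t) ∧
      ∫⁻ θ, ENNReal.ofReal (1 / (L θ + t)) ∂Q < ⊤}) :
    (∫⁻ θ in Ioi (0 : ℝ),
        ENNReal.ofReal (4 * θ ^ 2 * Real.exp (-(2 * θ)) / (θ - 1) ^ 2) = ⊤) ∧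
    ¬ (∫⁻ θ, ENNReal.ofReal (1 / (L θ + 0)) ∂Q < ⊤) ∧
    (0 : ℝ) ∉ B ∧ sInf B = 0 ∧ B = Ioi (0 : ℝ) := by
  obtain rfl : L = fun θ => (θ - 1) ^ 2 := funext hL
  have hdens : ∀ θ ∈ Ioo (1 : ℝ) 2, 4 * exp (-4) ≤ 4 * θ ^ 2 * exp (-(2 * θ)) := fun θ hθ =>
    calc 4 * exp (-4) = 4 * 1 ^ 2 * exp (-4) := by ring
      _ ≤ 4 * θ ^ 2 * exp (-(2 * θ)) := by gcongr <;> linarith [hθ.1, hθ.2]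
  have hdiv : ∫⁻ θ in Ioi (0 : ℝ),
      ENNReal.ofReal (4 * θ ^ 2 * exp (-(2 * θ)) / (θ - 1) ^ 2) = ⊤ :=
    setLIntegral_ofReal_div_sq_sub_eq_top one_lt_two
      (Ioo_subset_Ioi_self.trans (Ioi_subset_Ioi zero_le_one)) (by positivity) hdens
  have hnorm : ∫⁻ θ, ENNReal.ofReal (1 / (θ - 1) ^ 2) ∂Q = ⊤ := by
    rw [hQ, lintegral_withDensity_eq_lintegral_mul _ (by fun_prop) (by fun_prop),
      ← restrict_Ioi_eq_restrict_Ici, ← hdiv]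
    refine setLIntegral_congr_fun measurableSet_Ioi fun θ _ => ?_
    rw [Pi.mul_apply, ← ENNReal.ofReal_mul (by positivity), mul_one_div]
  have hQ_gamma : Q = gammaMeasure 3 2 := hQ.trans restrict_Ici_withDensity_eq_gammaMeasure
  have : IsProbabilityMeasure Q := hQ_gamma ▸ isProbabilityMeasure_gammaMeasure three_pos two_pos
  obtain rfl : B = Ioi 0 := hB.trans <| setOf_ae_pos_add_and_lintegral_lt_top_eq_Ioi isOpen_Ioi
    (hQ_gamma ▸ absolutelyContinuous_gammaMeasure three_pos two_pos) (by fun_prop)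
    (fun θ => sq_nonneg _) one_pos (by ring) hnorm
  exact ⟨hdiv, by simpa only [add_zero, hnorm] using lt_irrefl ⊤, self_notMem_Ioi, csInf_Ioi, rfl⟩
end
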